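/- Let ω ∈ Ω. The map Λ : (π_0,…,π_{s−1},ω) ↦ (π_0,…,π_{s−1}) is a bijection between P_ρ^ω (the set of finite sequences of secondary-coloured integers whose consecutive parts satisfy ≫_ρ and whose last part equals ω) and P_S^ω, and it preserves the size and the colour sequence when the part ω is omitted. -/

import Mathlib

open Classical

open Classical in
/-- `chi P` is 1 if `P` holds and 0 otherwise. -/
noncomputable def chi (P : Prop) : ℤ := if P then 1 else 0

/-- A primary-coloured integer `k_{c_u}` is the pair `(k, u)`. -/
abbrev PCInt : Type := ℤ × ℤ

/-- A secondary-coloured integer `k_{c_{x,y}}` is the pair `(k, (x, y))` with `x ≤ y`. -/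
abbrev SCInt : Type := ℤ × (ℤ × ℤ)

/-- The order on primary-coloured integers: `k_{c_u} ≥ l_{c_v} ↔ k - l ≥ χ(u < v)`. -/
def pge (a b : PCInt) : Prop := a.1 - b.1 ≥ if a.2 < b.2 then 1 else 0

/-- The strict order on primary-coloured integers: `k_{c_u} > l_{c_v} ↔ k - l ≥ χ(u ≤ v)`. -/
def pgt (a b : PCInt) : Prop := a.1 - b.1 ≥ if a.2 ≤ b.2 then 1 else 0

/-- `u` is a valid primary colour: `u ∈ O = {1,…,m}`. -/
def PVal (m : ℕ) (u : ℤ) : Prop := 1 ≤ u ∧ u ≤ (m : ℤ)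

/-- `(x,y)` is a valid secondary colour: `x ≤ y ∈ O = {1,…,m}`. -/
def SVal (m : ℕ) (c : ℤ × ℤ) : Prop := 1 ≤ c.1 ∧ c.1 ≤ c.2 ∧ c.2 ≤ (m : ℤ)

/-- `η(2k_{c_{x,y}}) = k_{c_y}` and `η((2k+1)_{c_{x,y}}) = (k+1)_{c_x}`. -/
def etaP (a : SCInt) : PCInt :=
  if a.1 % 2 = 0 then (a.1 / 2, a.2.2) else ((a.1 - 1) / 2 + 1, a.2.1)

/-- `ζ(2k_{c_{x,y}}) = k_{c_x}` and `ζ((2k+1)_{c_{x,y}}) = k_{c_y}`. -/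
def zetaP (a : SCInt) : PCInt :=
  if a.1 % 2 = 0 then (a.1 / 2, a.2.1) else ((a.1 - 1) / 2, a.2.2)

/-- `ρ(c_{x',y'}, c_{x,y}) = χ(x ≥ x') + χ(y ≥ y') - χ(y ≥ y' > x ≥ x')`
(the first argument is the colour of the earlier, larger part). -/
noncomputable def rho (c d : ℤ × ℤ) : ℤ :=
  chi (c.1 ≤ d.1) + chi (c.2 ≤ d.2) - chi (c.2 ≤ d.2 ∧ d.1 < c.2 ∧ c.1 ≤ d.1)

/-- `k_c ≫_ρ l_d ↔ k - l ≥ ρ(c, d)`. -/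
noncomputable def ggrho (a b : SCInt) : Prop := a.1 - b.1 ≥ rho a.2 b.2

/-- The successor operator on primary-coloured integers: `succ(k_{c_u}) = k_{c_{u+1}}`
for `u < m` and `succ(k_{c_m}) = (k+1)_{c_1}`. -/
def succP (m : ℕ) (a : PCInt) : PCInt :=
  if a.2 = (m : ℤ) then (a.1 + 1, 1) else (a.1, a.2 + 1)

/-- `b = f(a)` or `b = d(a)`: either `η(b) = succ(η(a))` and `ζ(b) = ζ(a)`, or
`η(b) = η(a)` and `ζ(b) = succ⁻¹(ζ(a))`. -/
def stepRel (m : ℕ) (a b : SCInt) : Prop :=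
  (etaP b = succP m (etaP a) ∧ zetaP b = zetaP a) ∨
  (etaP b = etaP a ∧ succP m (zetaP b) = zetaP a)

/-- A path in `ℤ_S`: a sequence `(e_0,…,e_m)` of `m+1` secondary-coloured integers such
that each `e_{u+1}` is `f(e_u)` or `d(e_u)`. -/
def IsPath (m : ℕ) (e : ℕ → SCInt) : Prop :=
  (∀ j ≤ m, SVal m (e j).2) ∧ (∀ j < m, stepRel m (e j) (e (j + 1)))

/-- The order `≥` on `ℤ_S`: `k_c ≥ l_d` iff `η(k_c) > η(l_d)`, or `η(k_c) = η(l_d)` and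
`ζ(k_c) ≤ ζ(l_d)`. -/
def sge (a b : SCInt) : Prop :=
  pgt (etaP a) (etaP b) ∨ (etaP a = etaP b ∧ pge (zetaP b) (zetaP a))

/-- The set `Ω = {ω_u : 0 ≤ u ≤ ⌊m/2⌋} ⊔ {0_{c_{u,\bar u}} : 1 ≤ u ≤ ⌈m/2⌉}`, where
`ω_0 = (-1)_{c_{m,m}}`, `ω_i = 0_{c_{i,\overline{i+1}}} = 0_{c_{i,m-i}}` for
`1 ≤ i ≤ ⌊m/2⌋`, and `\bar x = m+1-x`. -/
def OmegaSet (m : ℕ) : Set SCInt :=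
  {((-1 : ℤ), ((m : ℤ), (m : ℤ)))} ∪
  {a | ∃ i : ℤ, 1 ≤ i ∧ 2 * i ≤ (m : ℤ) ∧ a = ((0 : ℤ), (i, (m : ℤ) - i))} ∪
  {a | ∃ u : ℤ, 1 ≤ u ∧ 2 * u ≤ (m : ℤ) + 1 ∧ a = ((0 : ℤ), (u, (m : ℤ) + 1 - u))}

/-- `ℤ_S^+ = {0_{c_{x,y}} : m ≥ y ≥ x > \bar y ≥ 1} ⊔ (ℤ_{>0})_S`. -/
def ZSplus (m : ℕ) : Set SCInt :=
  {a | SVal m a.2 ∧ (0 < a.1 ∨ (a.1 = 0 ∧ (m : ℤ) + 1 - a.2.2 < a.2.1))}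

/-- `P_S`: generalised coloured partitions with parts in `ℤ_S^+` and order `≥`. -/
def PS (m : ℕ) : Set (List SCInt) :=
  {π | (∀ a ∈ π, a ∈ ZSplus m) ∧ π.Chain' sge}

/-- `P_S^ω`: the partitions of `P_S` whose frequency sequence, extended by the fictitious
frequencies `f_u = χ(u = ω)` for `u ∈ Ω`, satisfies `f_{e_0} + ⋯ + f_{e_m} ≤ 1` for every
path `(e_0,…,e_m)` all of whose entries lie in `Ω ⊔ ℤ_S^+`. -/
def PSomega (m : ℕ) (ω : SCInt) : Set (List SCInt) :=
  {π | π ∈ PS m ∧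
    ∀ e : ℕ → SCInt, IsPath m e → (∀ j ≤ m, e j ∈ OmegaSet m ∪ ZSplus m) →
      (∑ j ∈ Finset.range (m + 1),
        (π.count (e j) + (if e j = ω then 1 else 0))) ≤ 1}

/-- `P_ρ^ω`: finite sequences of secondary-coloured integers whose consecutive parts
satisfy `≫_ρ` and whose last part equals `ω`. -/
noncomputable def PRhoOmega (m : ℕ) (ω : SCInt) : Set (List SCInt) :=
  {π | π.getLast? = some ω ∧ (∀ a ∈ π, SVal m a.2) ∧ π.Chain' ggrho}

/-! ### Auxiliary machinery: coordinates -/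

/-- Linearisation of a primary-coloured integer. -/
def pcN (m : ℕ) (p : PCInt) : ℤ := m * p.1 + p.2

/-- First coordinate of a secondary-coloured integer: `N(η(a))`. -/
def AA (m : ℕ) (a : SCInt) : ℤ := pcN m (etaP a)

/-- Second coordinate: `N(ζ(a))`. -/
def BB (m : ℕ) (a : SCInt) : ℤ := pcN m (zetaP a)

/-- Strict dominance in both coordinates. -/
def Dom (m : ℕ) (a b : SCInt) : Prop := AA m b < AA m a ∧ BB m b < BB m a

lemma pcN_lt_iff {m : ℕ} (hm : 1 ≤ m) {p q : PCInt} (hp : PVal m p.2) (hq : PVal m q.2) :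
    pcN m q < pcN m p ↔ (q.1 < p.1 ∨ (q.1 = p.1 ∧ q.2 < p.2)) := by
  obtain ⟨hp1, hp2⟩ := hp
  obtain ⟨hq1, hq2⟩ := hq
  have hm' : (1:ℤ) ≤ (m:ℤ) := by exact_mod_cast hm
  unfold pcN
  constructor
  · intro h
    rcases lt_trichotomy q.1 p.1 with h' | h' | h'
    · exact Or.inl h'
    · refine Or.inr ⟨h', ?_⟩
      rw [h'] at h; linarith
    · exfalso
      have hmul : (m:ℤ) * (p.1 + 1) ≤ (m:ℤ) * q.1 :=
        mul_le_mul_of_nonneg_left (by omega) (by linarith)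
      nlinarith
  · rintro (h | ⟨h1, h2⟩)
    · have hmul : (m:ℤ) * (q.1 + 1) ≤ (m:ℤ) * p.1 :=
        mul_le_mul_of_nonneg_left (by omega) (by linarith)
      nlinarith
    · rw [h1]; linarith

lemma pcN_inj {m : ℕ} (hm : 1 ≤ m) {p q : PCInt} (hp : PVal m p.2) (hq : PVal m q.2)
    (h : pcN m p = pcN m q) : p = q := by
  have h1 : ¬ (q.1 < p.1 ∨ (q.1 = p.1 ∧ q.2 < p.2)) := by
    rw [← pcN_lt_iff hm hp hq]; simp [h]
  have h2 : ¬ (p.1 < q.1 ∨ (p.1 = q.1 ∧ p.2 < q.2)) := by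
    rw [← pcN_lt_iff hm hq hp]; simp [h]
  have : p.1 = q.1 ∧ p.2 = q.2 := by omega
  exact Prod.ext this.1 this.2

lemma pgt_iff {m : ℕ} (hm : 1 ≤ m) {p q : PCInt} (hp : PVal m p.2) (hq : PVal m q.2) :
    pgt p q ↔ pcN m q < pcN m p := by
  rw [pcN_lt_iff hm hp hq]
  unfold pgt
  split_ifs with h <;> constructor <;> intro h'
  · omega
  · rcases h' with h' | ⟨h1, h2⟩ <;> omega
  · omega
  · rcases h' with h' | ⟨h1, h2⟩ <;> omega

lemma pge_iff {m : ℕ} (hm : 1 ≤ m) {p q : PCInt} (hp : PVal m p.2) (hq : PVal m q.2) :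
    pge p q ↔ pcN m q ≤ pcN m p := by
  rw [← not_lt, pcN_lt_iff hm hq hp]
  unfold pge
  push_neg
  split_ifs with h <;> constructor <;> intro h'
  · exact ⟨by omega, fun h1 => by omega⟩
  · omega
  · exact ⟨by omega, fun h1 => by omega⟩
  · omega

lemma etaP_even {a : SCInt} {k : ℤ} (hk : a.1 = 2 * k) : etaP a = (k, a.2.2) := by
  unfold etaP; rw [hk, if_pos (by omega)]
  congr 1; omega

lemma etaP_odd {a : SCInt} {k : ℤ} (hk : a.1 = 2 * k + 1) : etaP a = (k + 1, a.2.1) := by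
  unfold etaP; rw [hk, if_neg (by omega)]
  congr 1; omega

lemma zetaP_even {a : SCInt} {k : ℤ} (hk : a.1 = 2 * k) : zetaP a = (k, a.2.1) := by
  unfold zetaP; rw [hk, if_pos (by omega)]
  congr 1; omega

lemma zetaP_odd {a : SCInt} {k : ℤ} (hk : a.1 = 2 * k + 1) : zetaP a = (k, a.2.2) := by
  unfold zetaP; rw [hk, if_neg (by omega)]
  congr 1; omega

lemma coords (a : SCInt) : ∃ k : ℤ,
    (a.1 = 2 * k ∧ etaP a = (k, a.2.2) ∧ zetaP a = (k, a.2.1)) ∨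
    (a.1 = 2 * k + 1 ∧ etaP a = (k + 1, a.2.1) ∧ zetaP a = (k, a.2.2)) := by
  rcases Int.even_or_odd a.1 with ⟨k, hk⟩ | ⟨k, hk⟩
  · have hk' : a.1 = 2 * k := by omega
    exact ⟨k, Or.inl ⟨hk', etaP_even hk', zetaP_even hk'⟩⟩
  · exact ⟨k, Or.inr ⟨hk, etaP_odd hk, zetaP_odd hk⟩⟩

lemma etaP_val {m : ℕ} {a : SCInt} (ha : SVal m a.2) : PVal m (etaP a).2 := by
  obtain ⟨h1, h2, h3⟩ := ha
  unfold etaP PVal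
  split_ifs <;> dsimp <;> omega

lemma zetaP_val {m : ℕ} {a : SCInt} (ha : SVal m a.2) : PVal m (zetaP a).2 := by
  obtain ⟨h1, h2, h3⟩ := ha
  unfold zetaP PVal
  split_ifs <;> dsimp <;> omega

lemma eta_zeta_inj {a b : SCInt} (h1 : etaP a = etaP b) (h2 : zetaP a = zetaP b) :
    a = b := by
  obtain ⟨a1, a2, a3⟩ := a
  obtain ⟨b1, b2, b3⟩ := b
  unfold etaP at h1
  unfold zetaP at h2
  dsimp at h1 h2
  split_ifs at h1 h2 with hpa hpb hpb <;>
    simp only [Prod.mk.injEq] at h1 h2 ⊢ <;>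
    exact ⟨by omega, by omega, by omega⟩
lemma sc_inj {m : ℕ} (hm : 1 ≤ m) {a b : SCInt} (ha : SVal m a.2) (hb : SVal m b.2)
    (hA : AA m a = AA m b) (hB : BB m a = BB m b) : a = b :=
  eta_zeta_inj (pcN_inj hm (etaP_val ha) (etaP_val hb) hA)
    (pcN_inj hm (zetaP_val ha) (zetaP_val hb) hB)

lemma ggrho_iff {m : ℕ} (hm : 1 ≤ m) {a b : SCInt} (ha : SVal m a.2) (hb : SVal m b.2) :
    ggrho a b ↔ Dom m a b := by
  obtain ⟨k, hca⟩ := coords a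
  obtain ⟨l, hcb⟩ := coords b
  unfold Dom AA BB
  rw [pcN_lt_iff hm (etaP_val ha) (etaP_val hb),
    pcN_lt_iff hm (zetaP_val ha) (zetaP_val hb)]
  obtain ⟨hax, haxy, hay⟩ := ha
  obtain ⟨hbx, hbxy, hby⟩ := hb
  rcases hca with ⟨h1, he, hz⟩ | ⟨h1, he, hz⟩ <;> rcases hcb with ⟨h2, he2, hz2⟩ | ⟨h2, he2, hz2⟩ <;>
  · rw [he, he2, hz, hz2]
    unfold ggrho rho chi
    rw [h1, h2]
    dsimp only
    split_ifs <;> omega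

lemma sge_of_dom {m : ℕ} (hm : 1 ≤ m) {a b : SCInt} (ha : SVal m a.2) (hb : SVal m b.2)
    (h : Dom m a b) : sge a b :=
  Or.inl ((pgt_iff hm (etaP_val ha) (etaP_val hb)).mpr h.1)

lemma sge_lex {m : ℕ} (hm : 1 ≤ m) {a b : SCInt} (ha : SVal m a.2) (hb : SVal m b.2)
    (h : sge a b) : AA m b < AA m a ∨ (AA m a = AA m b ∧ BB m a ≤ BB m b) := by
  rcases h with h | ⟨h1, h2⟩
  · exact Or.inl ((pgt_iff hm (etaP_val ha) (etaP_val hb)).mp h)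
  · exact Or.inr ⟨congrArg (pcN m) h1, (pge_iff hm (zetaP_val hb) (zetaP_val ha)).mp h2⟩

lemma pcN_succ (m : ℕ) (p : PCInt) : pcN m (succP m p) = pcN m p + 1 := by
  unfold pcN succP
  split_ifs with h
  · dsimp only; rw [h]; ring
  · dsimp only; ring

lemma succP_val {m : ℕ} (hm : 1 ≤ m) {p : PCInt} (hp : PVal m p.2) : PVal m (succP m p).2 := by
  obtain ⟨h1, h2⟩ := hp
  unfold succP PVal
  split_ifs with h <;> dsimp <;> omega

lemma step_coords {m : ℕ} {a b : SCInt} (h : stepRel m a b) :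
    (AA m b = AA m a + 1 ∧ BB m b = BB m a) ∨ (AA m b = AA m a ∧ BB m b = BB m a - 1) := by
  rcases h with ⟨h1, h2⟩ | ⟨h1, h2⟩
  · left
    constructor
    · unfold AA; rw [h1, pcN_succ]
    · unfold BB; rw [h2]
  · right
    constructor
    · unfold AA; rw [h1]
    · have hsucc := pcN_succ m (zetaP b)
      rw [h2] at hsucc
      unfold BB
      omega

lemma step_of_coords {m : ℕ} (hm : 1 ≤ m) {a b : SCInt} (ha : SVal m a.2) (hb : SVal m b.2)
    (h : (AA m b = AA m a + 1 ∧ BB m b = BB m a) ∨ (AA m b = AA m a ∧ BB m b = BB m a - 1)) :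
    stepRel m a b := by
  unfold AA BB at h
  rcases h with ⟨h1, h2⟩ | ⟨h1, h2⟩
  · left
    constructor
    · refine pcN_inj hm (etaP_val hb) (succP_val hm (etaP_val ha)) ?_
      rw [pcN_succ]; exact h1
    · exact pcN_inj hm (zetaP_val hb) (zetaP_val ha) h2
  · right
    constructor
    · exact pcN_inj hm (etaP_val hb) (etaP_val ha) h1
    · refine pcN_inj hm (succP_val hm (zetaP_val hb)) (zetaP_val ha) ?_
      rw [pcN_succ]; omega

lemma AB_bounds {m : ℕ} {a : SCInt} (ha : SVal m a.2) :
    0 ≤ AA m a - BB m a ∧ AA m a - BB m a ≤ m := by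
  obtain ⟨k, hca⟩ := coords a
  obtain ⟨hax, haxy, hay⟩ := ha
  rcases hca with ⟨h1, he, hz⟩ | ⟨h1, he, hz⟩ <;>
  · unfold AA BB
    rw [he, hz]
    unfold pcN
    dsimp only
    constructor <;> linarith
lemma prod3_ext {a b : SCInt} (h1 : a.1 = b.1) (h2 : a.2.1 = b.2.1)
    (h3 : a.2.2 = b.2.2) : a = b := by
  obtain ⟨x, y, z⟩ := a
  obtain ⟨x', y', z'⟩ := b
  simp_all

lemma pairwise_count_le_one {m : ℕ} :
    ∀ {l : List SCInt} {a : SCInt}, l.Pairwise (Dom m) → l.count a ≤ 1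
  | [], a, _ => by simp
  | b :: t, a, hp => by
    rw [List.pairwise_cons] at hp
    by_cases hba : a = b
    · subst hba
      rw [List.count_cons_self]
      have hnt : a ∉ t := fun hmem => absurd (hp.1 a hmem).1 (lt_irrefl _)
      rw [List.count_eq_zero.mpr hnt]
    · rw [List.count_cons_of_ne (Ne.symm hba)]
      exact pairwise_count_le_one (m := m) hp.2

lemma nodup_of_count {α : Type*} [BEq α] [LawfulBEq α] :
    ∀ {l : List α}, (∀ v ∈ l, l.count v ≤ 1) → l.Nodup
  | [], _ => List.nodup_nil
  | a :: t, h => by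
    rw [List.nodup_cons]
    constructor
    · intro hat
      have h1 := h a (by simp)
      rw [List.count_cons_self] at h1
      have h2 := List.count_pos_iff.mpr hat
      omega
    · refine nodup_of_count (fun v hv => ?_)
      have h1 := h v (by simp [hv])
      rw [List.count_cons] at h1
      omega

lemma mulfacts (m : ℕ) (hm : 1 ≤ m) (k : ℤ) :
    (1 ≤ k → (m:ℤ) ≤ (m:ℤ) * k) ∧ (k ≤ -1 → (m:ℤ) * k ≤ -(m:ℤ)) ∧
    (k ≤ -2 → (m:ℤ) * k ≤ -2 * (m:ℤ)) ∧ (k = 0 → (m:ℤ) * k = 0) ∧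
    (k = -1 → (m:ℤ) * k = -(m:ℤ)) := by
  have hm' : (1:ℤ) ≤ (m:ℤ) := by exact_mod_cast hm
  refine ⟨fun h => ?_, fun h => ?_, fun h => ?_, fun h => by rw [h]; ring,
    fun h => by rw [h]; ring⟩
  · nlinarith
  · nlinarith
  · nlinarith

lemma sumAB {m : ℕ} {a : SCInt} {k : ℤ}
    (h : (a.1 = 2 * k ∧ etaP a = (k, a.2.2) ∧ zetaP a = (k, a.2.1)) ∨
         (a.1 = 2 * k + 1 ∧ etaP a = (k + 1, a.2.1) ∧ zetaP a = (k, a.2.2))) :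
    (a.1 = 2 * k ∧ AA m a + BB m a = 2 * ((m:ℤ) * k) + a.2.1 + a.2.2) ∨
    (a.1 = 2 * k + 1 ∧ AA m a + BB m a = 2 * ((m:ℤ) * k) + m + a.2.1 + a.2.2) := by
  rcases h with ⟨h1, he, hz⟩ | ⟨h1, he, hz⟩
  · left
    refine ⟨h1, ?_⟩
    unfold AA BB; rw [he, hz]; unfold pcN; dsimp only; ring
  · right
    refine ⟨h1, ?_⟩
    unfold AA BB; rw [he, hz]; unfold pcN; dsimp only; ring

lemma ZS_iff {m : ℕ} (hm : 1 ≤ m) {a : SCInt} (ha : SVal m a.2) :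
    a ∈ ZSplus m ↔ (m:ℤ) + 2 ≤ AA m a + BB m a := by
  obtain ⟨k, hca⟩ := coords a
  obtain ⟨f1, f2, f3, f4, f5⟩ := mulfacts m hm k
  obtain ⟨hax, haxy, hay⟩ := ha
  have hmem : a ∈ ZSplus m ↔ (0 < a.1 ∨ (a.1 = 0 ∧ (m:ℤ) + 1 - a.2.2 < a.2.1)) := by
    unfold ZSplus
    simp only [Set.mem_setOf_eq]
    exact ⟨fun h => h.2, fun h => ⟨⟨hax, haxy, hay⟩, h⟩⟩
  rw [hmem]
  rcases sumAB (m := m) hca with ⟨h1, hS⟩ | ⟨h1, hS⟩ <;>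
  · rw [hS, h1]
    rcases lt_trichotomy k 0 with h | h | h <;>
      constructor <;> intro h' <;>
      [skip; skip; skip; skip; skip; skip] <;>
      first
        | (exfalso; rcases h' with h' | ⟨h', _⟩ <;> omega)
        | omega
        | (exfalso; omega)
/-- Interpretation of a coordinate pair as a secondary-coloured integer. -/
def toSC (m : ℕ) (A B : ℤ) : SCInt :=
  if A - B ≤ (A - 1) % m then
    (2 * ((A - 1) / m), (B - m * ((A - 1) / m), (A - 1) % m + 1))
  else
    (2 * ((A - 1) / m) - 1, ((A - 1) % m + 1, B - m * ((A - 1) / m - 1)))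

lemma toSC_spec {m : ℕ} (hm : 1 ≤ m) {A B : ℤ} (h0 : 0 ≤ A - B) (h1 : A - B ≤ m) :
    SVal m (toSC m A B).2 ∧ AA m (toSC m A B) = A ∧ BB m (toSC m A B) = B := by
  have hm' : (0:ℤ) < (m:ℤ) := by exact_mod_cast hm
  have hdm : (m:ℤ) * ((A - 1) / m) + (A - 1) % m = A - 1 := Int.mul_ediv_add_emod _ _
  have hr0 : 0 ≤ (A - 1) % m := Int.emod_nonneg _ (by omega)
  have hrm : (A - 1) % m < m := Int.emod_lt_of_pos _ hm'
  have hq1 : (m:ℤ) * ((A - 1) / m - 1) = (m:ℤ) * ((A - 1) / m) - m := by ring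
  unfold toSC
  split_ifs with hc
  · have he : etaP (2 * ((A - 1) / (m:ℤ)), (B - m * ((A - 1) / m), (A - 1) % m + 1))
        = ((A - 1) / (m:ℤ), (A - 1) % m + 1) := etaP_even rfl
    have hz : zetaP (2 * ((A - 1) / (m:ℤ)), (B - m * ((A - 1) / m), (A - 1) % m + 1))
        = ((A - 1) / (m:ℤ), B - m * ((A - 1) / m)) := zetaP_even rfl
    refine ⟨⟨?_, ?_, ?_⟩, ?_, ?_⟩
    · dsimp only; omega
    · dsimp only; omega
    · dsimp only; omega
    · unfold AA; rw [he]; unfold pcN; dsimp only; omega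
    · unfold BB; rw [hz]; unfold pcN; dsimp only; omega
  · have hk : (2 * ((A - 1) / (m:ℤ)) - 1, ((A - 1) % m + 1, B - m * ((A - 1) / m - 1))).1
        = 2 * ((A - 1) / (m:ℤ) - 1) + 1 := by dsimp only; ring
    have he := etaP_odd hk
    have hz := zetaP_odd hk
    refine ⟨⟨?_, ?_, ?_⟩, ?_, ?_⟩
    · dsimp only; omega
    · dsimp only; omega
    · dsimp only; omega
    · unfold AA; rw [he]
      unfold pcN; dsimp only
      have : (A - 1) / (m:ℤ) - 1 + 1 = (A - 1) / (m:ℤ) := by ring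
      rw [this]; omega
    · unfold BB; rw [hz]; unfold pcN; dsimp only; omega

lemma path_mono {m : ℕ} {e : ℕ → SCInt} (hp : ∀ j < m, stepRel m (e j) (e (j + 1))) :
    ∀ j j' : ℕ, j ≤ j' → j' ≤ m →
      AA m (e j) ≤ AA m (e j') ∧ BB m (e j') ≤ BB m (e j) ∧
      AA m (e j') - BB m (e j') = AA m (e j) - BB m (e j) + ((j' : ℤ) - j) := by
  intro j j' hjj hj'm
  induction j' with
  | zero =>
    have : j = 0 := by omega
    subst this
    simp
  | succ n ih =>
    rcases Nat.eq_or_lt_of_le hjj with h | h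
    · subst h; simp
    · have h1 := ih (by omega) (by omega)
      have h2 := step_coords (hp n (by omega))
      push_cast at h1 ⊢
      rcases h2 with ⟨ha, hb⟩ | ⟨ha, hb⟩ <;>
        exact ⟨by omega, by omega, by omega⟩

/-- Construction of a path through two product-comparable points. -/
lemma path_exists {m : ℕ} (hm : 1 ≤ m) {p q : SCInt} (hp : SVal m p.2) (hq : SVal m q.2)
    (hsp : (m:ℤ) ≤ AA m p + BB m p) (hsq : (m:ℤ) ≤ AA m q + BB m q)
    (hA : AA m p ≤ AA m q) (hB : BB m q ≤ BB m p)
    (hOZ : ∀ a : SCInt, SVal m a.2 → (m:ℤ) ≤ AA m a + BB m a → a ∈ OmegaSet m ∪ ZSplus m) :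
    ∃ e : ℕ → SCInt, IsPath m e ∧ (∀ j ≤ m, e j ∈ OmegaSet m ∪ ZSplus m) ∧
      ∃ jp jq : ℕ, jp ≤ m ∧ jq ≤ m ∧ e jp = p ∧ e jq = q ∧ (p ≠ q → jp ≠ jq) := by
  have hdp := AB_bounds hp
  have hdq := AB_bounds hq
  set Af : ℕ → ℤ := fun j =>
    min (max (AA m p) (BB m p + j)) (max (AA m q) (BB m q + j)) with hAf
  set e : ℕ → SCInt := fun j => toSC m (Af j) (Af j - j) with he
  have hd : ∀ j : ℕ, j ≤ m → 0 ≤ Af j - (Af j - j) ∧ Af j - (Af j - j) ≤ m := by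
    intro j hj
    constructor <;> omega
  have hspec : ∀ j : ℕ, j ≤ m →
      SVal m (e j).2 ∧ AA m (e j) = Af j ∧ BB m (e j) = Af j - j := by
    intro j hj
    exact toSC_spec hm (hd j hj).1 (hd j hj).2
  have hsum : ∀ j : ℕ, j ≤ m → (m:ℤ) ≤ Af j + (Af j - j) := by
    intro j hj
    have hj' : (j : ℤ) ≤ m := by exact_mod_cast hj
    rw [hAf]
    dsimp only
    omega
  refine ⟨e, ⟨fun j hj => (hspec j hj).1, ?_⟩, ?_, ?_⟩
  · intro j hj
    have hs1 := hspec j (by omega)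
    have hs2 := hspec (j + 1) (by omega)
    have hstep : Af (j + 1) = Af j ∨ Af (j + 1) = Af j + 1 := by
      rw [hAf]
      dsimp only
      push_cast
      omega
    apply step_of_coords hm hs1.1 hs2.1
    rcases hstep with h | h
    · right
      refine ⟨by omega, by push_cast; omega⟩
    · left
      refine ⟨by omega, by push_cast; omega⟩
  · intro j hj
    have hs := hspec j hj
    exact hOZ (e j) hs.1 (by rw [hs.2.1, hs.2.2]; exact hsum j hj)
  · have hjpm : (AA m p - BB m p).toNat ≤ m := by omega
    have hjqm : (AA m q - BB m q).toNat ≤ m := by omega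
    have hep : e (AA m p - BB m p).toNat = p := by
      have hs := hspec _ hjpm
      have hcast : ((AA m p - BB m p).toNat : ℤ) = AA m p - BB m p := by omega
      have hAfp : Af (AA m p - BB m p).toNat = AA m p := by
        rw [hAf]; dsimp only; rw [hcast]; omega
      exact sc_inj hm hs.1 hp (by rw [hs.2.1, hAfp]) (by rw [hs.2.2, hAfp, hcast]; ring)
    have heq : e (AA m q - BB m q).toNat = q := by
      have hs := hspec _ hjqm
      have hcast : ((AA m q - BB m q).toNat : ℤ) = AA m q - BB m q := by omega
      have hAfq : Af (AA m q - BB m q).toNat = AA m q := by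
        rw [hAf]; dsimp only; rw [hcast]; omega
      exact sc_inj hm hs.1 hq (by rw [hs.2.1, hAfq]) (by rw [hs.2.2, hAfq, hcast]; ring)
    exact ⟨_, _, hjpm, hjqm, hep, heq,
      fun hne hj => hne (by rw [← hep, hj, heq])⟩
lemma chain'_imp_mem {α : Type*} {R S : α → α → Prop} :
    ∀ {l : List α}, (∀ a ∈ l, ∀ b ∈ l, R a b → S a b) → l.Chain' R → l.Chain' S
  | [], _, _ => List.isChain_nil
  | [_], _, _ => List.isChain_singleton _
  | a :: b :: t, h, hc => by
    unfold List.Chain' at hc ⊢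
    rw [List.isChain_cons_cons] at hc ⊢
    exact ⟨h a (by simp) b (by simp) hc.1,
      chain'_imp_mem (fun x hx y hy => h x (List.mem_cons_of_mem _ hx)
        y (List.mem_cons_of_mem _ hy)) hc.2⟩

lemma chain'_pairwise {α : Type*} {R S : α → α → Prop}
    (hts : ∀ a b c, S a b → S b c → S a c) :
    ∀ {l : List α}, (∀ a ∈ l, ∀ b ∈ l, R a b → S a b) → l.Chain' R → l.Pairwise S
  | [], _, _ => List.Pairwise.nil
  | [a], _, _ => List.pairwise_singleton _ _
  | a :: b :: t, h, hc => by
    unfold List.Chain' at hc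
    rw [List.isChain_cons_cons] at hc
    have hpt : (b :: t).Pairwise S :=
      chain'_pairwise hts (fun x hx y hy => h x (List.mem_cons_of_mem _ hx)
        y (List.mem_cons_of_mem _ hy)) hc.2
    refine List.Pairwise.cons (fun c hc' => ?_) hpt
    have hab : S a b := h a (by simp) b (by simp) hc.1
    rcases List.mem_cons.mp hc' with rfl | hct
    · exact hab
    · exact hts a b c hab (List.rel_of_pairwise_cons hpt hct)

lemma pairwise_imp_nodup {α : Type*} {R S : α → α → Prop} :
    ∀ {l : List α}, l.Nodup → (∀ a ∈ l, ∀ b ∈ l, a ≠ b → R a b → S a b) →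
      l.Pairwise R → l.Pairwise S
  | [], _, _, _ => List.Pairwise.nil
  | a :: t, hnd, h, hp => by
    rw [List.pairwise_cons] at hp ⊢
    rw [List.nodup_cons] at hnd
    refine ⟨fun b hb => h a (by simp) b (List.mem_cons_of_mem _ hb)
      (fun hab => hnd.1 (hab ▸ hb)) (hp.1 b hb), ?_⟩
    exact pairwise_imp_nodup hnd.2 (fun x hx y hy => h x (List.mem_cons_of_mem _ hx)
      y (List.mem_cons_of_mem _ hy)) hp.2

lemma sum_ge_two {n : ℕ} {F : ℕ → ℕ} (h2 : 2 ≤ ∑ j ∈ Finset.range n, F j) :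
    ∃ j1 < n, ∃ j2 < n, (j1 ≠ j2 ∧ 1 ≤ F j1 ∧ 1 ≤ F j2) ∨ (j1 = j2 ∧ 2 ≤ F j1) := by
  by_cases hall : ∀ j < n, F j ≤ 1
  · have hex : ∃ j ∈ Finset.range n, F j ≠ 0 := by
      by_contra h
      push_neg at h
      rw [Finset.sum_eq_zero h] at h2
      omega
    obtain ⟨j1, hj1r, hj1⟩ := hex
    have hsum := Finset.add_sum_erase _ F hj1r
    have hex2 : ∃ j ∈ (Finset.range n).erase j1, F j ≠ 0 := by
      by_contra h
      push_neg at h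
      rw [Finset.sum_eq_zero h] at hsum
      have := hall j1 (Finset.mem_range.mp hj1r)
      omega
    obtain ⟨j2, hj2r, hj2⟩ := hex2
    have hj2r' := Finset.mem_of_mem_erase hj2r
    exact ⟨j1, Finset.mem_range.mp hj1r, j2, Finset.mem_range.mp hj2r',
      Or.inl ⟨(Finset.ne_of_mem_erase hj2r).symm, by omega, by omega⟩⟩
  · push_neg at hall
    obtain ⟨j, hj, hFj⟩ := hall
    exact ⟨j, hj, j, hj, Or.inr ⟨rfl, hFj⟩⟩

lemma sum_le_one_single {n : ℕ} {F : ℕ → ℕ} (h : ∑ j ∈ Finset.range n, F j ≤ 1)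
    {j : ℕ} (hj : j < n) : F j ≤ 1 :=
  le_trans (Finset.single_le_sum (f := F) (fun _ _ => Nat.zero_le _)
    (Finset.mem_range.mpr hj)) h

lemma sum_le_one_two {n : ℕ} {F : ℕ → ℕ} (h : ∑ j ∈ Finset.range n, F j ≤ 1)
    {j1 j2 : ℕ} (hj1 : j1 < n) (hj2 : j2 < n) (hne : j1 ≠ j2) : F j1 + F j2 ≤ 1 := by
  have hsub : ({j1, j2} : Finset ℕ) ⊆ Finset.range n := by
    intro x hx
    simp only [Finset.mem_insert, Finset.mem_singleton] at hx
    rcases hx with rfl | rfl <;> exact Finset.mem_range.mpr ‹_›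
  calc F j1 + F j2 = ∑ j ∈ ({j1, j2} : Finset ℕ), F j := (Finset.sum_pair hne).symm
    _ ≤ ∑ j ∈ Finset.range n, F j :=
        Finset.sum_le_sum_of_subset hsub
    _ ≤ 1 := h
lemma omega_val {m : ℕ} (hm : 1 ≤ m) {ω : SCInt} (hω : ω ∈ OmegaSet m) :
    SVal m ω.2 ∧ (AA m ω + BB m ω = m ∨ AA m ω + BB m ω = m + 1) := by
  have hm' : (1:ℤ) ≤ (m:ℤ) := by exact_mod_cast hm
  simp only [OmegaSet, Set.mem_union, Set.mem_singleton_iff, Set.mem_setOf_eq] at hω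
  rcases hω with (rfl | ⟨i, hi1, hi2, rfl⟩) | ⟨u, hu1, hu2, rfl⟩
  · constructor
    · exact ⟨hm', le_refl _, le_refl _⟩
    · left
      have h1 : ((-1 : ℤ), ((m : ℤ), (m : ℤ))).1 = 2 * (-1) + 1 := by norm_num
      have he := etaP_odd h1
      have hz := zetaP_odd h1
      unfold AA BB
      rw [he, hz]
      unfold pcN
      dsimp only
      ring
  · constructor
    · exact ⟨hi1, by dsimp only; omega, by dsimp only; omega⟩
    · left
      have h1 : ((0 : ℤ), (i, (m : ℤ) - i)).1 = 2 * 0 := by norm_num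
      have he := etaP_even h1
      have hz := zetaP_even h1
      unfold AA BB
      rw [he, hz]
      unfold pcN
      dsimp only
      ring
  · constructor
    · exact ⟨hu1, by dsimp only; omega, by dsimp only; omega⟩
    · right
      have h1 : ((0 : ℤ), (u, (m : ℤ) + 1 - u)).1 = 2 * 0 := by norm_num
      have he := etaP_even h1
      have hz := zetaP_even h1
      unfold AA BB
      rw [he, hz]
      unfold pcN
      dsimp only
      ring

lemma mem_OZ {m : ℕ} (hm : 1 ≤ m) {a : SCInt} (ha : SVal m a.2)
    (hs : (m:ℤ) ≤ AA m a + BB m a) : a ∈ OmegaSet m ∪ ZSplus m := by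
  have hm' : (1:ℤ) ≤ (m:ℤ) := by exact_mod_cast hm
  rcases le_or_gt ((m:ℤ) + 2) (AA m a + BB m a) with h | h
  · exact Set.mem_union_right _ ((ZS_iff hm ha).mpr h)
  · left
    obtain ⟨k, hca⟩ := coords a
    have hSf := sumAB (m := m) hca
    obtain ⟨f1, f2, f3, f4, f5⟩ := mulfacts m hm k
    obtain ⟨hax, haxy, hay⟩ := ha
    simp only [OmegaSet, Set.mem_union, Set.mem_singleton_iff, Set.mem_setOf_eq]
    rcases hSf with ⟨h1, hS⟩ | ⟨h1, hS⟩
    · -- even: k must be 0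
      have hk0 : k = 0 := by omega
      subst hk0
      have hxy : a.2.1 + a.2.2 = m ∨ a.2.1 + a.2.2 = m + 1 := by omega
      rcases hxy with hxy | hxy
      · exact Or.inl (Or.inr ⟨a.2.1, hax, by omega,
          prod3_ext (show a.1 = 0 by omega) rfl (show a.2.2 = (m:ℤ) - a.2.1 by omega)⟩)
      · exact Or.inr ⟨a.2.1, hax, by omega,
          prod3_ext (show a.1 = 0 by omega) rfl (show a.2.2 = (m:ℤ) + 1 - a.2.1 by omega)⟩
    · -- odd: a = omega_0
      have hk : k = -1 := by omega
      subst hk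
      have hx : a.2.1 = m ∧ a.2.2 = m := by omega
      refine Or.inl (Or.inl ?_)
      have : a = (a.1, (a.2.1, a.2.2)) := rfl
      rw [this, h1, hx.1, hx.2]
      norm_num

/-- for `ω ∈ Ω`, the map `Λ : (π_0,…,π_{s-1},ω) ↦ (π_0,…,π_{s-1})` is a
bijection between `P_ρ^ω` and `P_S^ω` preserving the size and the colour sequence when
the part `ω` is omitted. -/
theorem stmt_18 (m : ℕ) (hm : 1 ≤ m) (ω : SCInt) (hω : ω ∈ OmegaSet m) :
    Set.BijOn (fun π : List SCInt => π.dropLast) (PRhoOmega m ω) (PSomega m ω) ∧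
    ∀ π ∈ PRhoOmega m ω,
      -- the size, omitting the part ω, is preserved
      ((π.dropLast.map Prod.fst).sum = ((π.dropLast : List SCInt).map Prod.fst).sum) ∧
      -- the colour sequence, omitting the part ω, is preserved
      ((π.dropLast.map (fun a => ({a.2.1, a.2.2} : Multiset ℤ))).sum =
        ((π.dropLast : List SCInt).map (fun a => ({a.2.1, a.2.2} : Multiset ℤ))).sum) := by
  have hm' : (1:ℤ) ≤ (m:ℤ) := by exact_mod_cast hm
  obtain ⟨hωv, hωs⟩ := omega_val hm hω
  have hOZ : ∀ a : SCInt, SVal m a.2 → (m:ℤ) ≤ AA m a + BB m a →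
      a ∈ OmegaSet m ∪ ZSplus m := fun a ha hs => mem_OZ hm ha hs
  refine ⟨⟨?_, ?_, ?_⟩, fun π _ => ⟨rfl, rfl⟩⟩
  · -- MapsTo
    intro π' hπ'
    obtain ⟨hlast, hval, hchain⟩ := hπ'
    have hωmem : ω ∈ π'.getLast? := by simp [hlast]
    have hsplit : π'.dropLast ++ [ω] = π' := List.dropLast_append_getLast? ω hωmem
    have hmem' : ∀ a ∈ π'.dropLast, a ∈ π' := fun a ha => by
      rw [← hsplit]; exact List.mem_append_left _ ha
    have hωπ' : ω ∈ π' := by rw [← hsplit]; exact List.mem_append_right _ (by simp)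
    have hpw : π'.Pairwise (Dom m) :=
      chain'_pairwise (fun a b c h1 h2 => ⟨by unfold Dom at *; omega, by unfold Dom at *; omega⟩)
        (fun a ha b hb hr => (ggrho_iff hm (hval a ha) (hval b hb)).mp hr) hchain
    have hpwA : (π'.dropLast ++ [ω]).Pairwise (Dom m) := by rw [hsplit]; exact hpw
    have hap := List.pairwise_append.mp hpwA
    have hDω : ∀ a ∈ π'.dropLast, Dom m a ω := fun a ha => hap.2.2 a ha ω (by simp)
    have hvalπ : ∀ a ∈ π'.dropLast, SVal m a.2 := fun a ha => hval a (hmem' a ha)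
    have hZS : ∀ a ∈ π'.dropLast, a ∈ ZSplus m := fun a ha => by
      refine (ZS_iff hm (hvalπ a ha)).mpr ?_
      obtain ⟨h1, h2⟩ := hDω a ha
      rcases hωs with h | h <;> omega
    simp only [PSomega, PS, Set.mem_setOf_eq]
    refine ⟨⟨hZS, ?_⟩, ?_⟩
    · exact chain'_imp_mem
        (fun a ha b hb hD => sge_of_dom hm (hvalπ a ha) (hvalπ b hb) hD)
        hap.1.isChain
    · intro e he hemem
      by_contra hcon
      push_neg at hcon
      have hcon2 : 2 ≤ ∑ j ∈ Finset.range (m + 1),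
          (π'.dropLast.count (e j) + (if e j = ω then 1 else 0)) := by omega
      obtain ⟨j1, hj1, j2, hj2, hcase⟩ := sum_ge_two hcon2
      have hmemπ' : ∀ i : ℕ,
          1 ≤ π'.dropLast.count (e i) + (if e i = ω then 1 else 0) → e i ∈ π' := by
        intro i hF
        by_cases hc : e i = ω
        · rw [hc]; exact hωπ'
        · simp only [hc, if_false, Nat.add_zero] at hF
          exact hmem' _ (List.count_pos_iff.mp (by omega))
      have hpwor : ∀ a ∈ π', ∀ b ∈ π', a ≠ b → Dom m a b ∨ Dom m b a := by
        intro a ha b hb hne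
        have hsymm : π'.Pairwise (fun x y => Dom m x y ∨ Dom m y x) :=
          hpw.imp (fun h => Or.inl h)
        haveI : Std.Symm (fun x y => Dom m x y ∨ Dom m y x) := ⟨fun x y h => Or.symm h⟩
        exact List.Pairwise.forall hsymm ha hb hne
      have hkey : ∀ i1 i2 : ℕ, i1 < i2 → i2 ≤ m →
          1 ≤ π'.dropLast.count (e i1) + (if e i1 = ω then 1 else 0) →
          1 ≤ π'.dropLast.count (e i2) + (if e i2 = ω then 1 else 0) → False := by
        intro i1 i2 h12 hi2m hF1 hF2
        have hmono := path_mono he.2 i1 i2 (by omega) hi2m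
        have hne : e i1 ≠ e i2 := by
          intro hEq
          rw [hEq] at hmono
          omega
        rcases hpwor _ (hmemπ' i1 hF1) _ (hmemπ' i2 hF2) hne with hD | hD <;>
          (obtain ⟨hd1, hd2⟩ := hD; omega)
      rcases hcase with ⟨hne12, hF1, hF2⟩ | ⟨heq, hF2c⟩
      · rcases Nat.lt_or_ge j1 j2 with h | h
        · exact hkey j1 j2 h (by omega) hF1 hF2
        · exact hkey j2 j1 (by omega) (by omega) hF2 hF1
      · -- a value appears twice
        have hc : π'.count (e j1) ≤ 1 := pairwise_count_le_one (m := m) hpw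
        rw [← hsplit, List.count_append] at hc
        by_cases hcc : e j1 = ω
        · rw [hcc] at hF2c hc
          have h1 : List.count ω [ω] = 1 := by simp
          have h3 : (if ω = ω then (1:ℕ) else 0) = 1 := if_pos rfl
          omega
        · simp only [hcc, if_false, Nat.add_zero] at hF2c
          omega
  · -- InjOn
    intro π1 h1 π2 h2 heq
    have hs1 : π1.dropLast ++ [ω] = π1 := List.dropLast_append_getLast? ω (by simp [h1.1])
    have hs2 : π2.dropLast ++ [ω] = π2 := List.dropLast_append_getLast? ω (by simp [h2.1])
    simp only at heq
    rw [← hs1, ← hs2, heq]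
  · -- SurjOn
    intro π hπ
    simp only [PSomega, PS, Set.mem_setOf_eq] at hπ
    obtain ⟨⟨hZS, hchain⟩, hpath⟩ := hπ
    have hvalπ : ∀ a ∈ π, SVal m a.2 := fun a ha => (hZS a ha).1
    have hsums : ∀ a ∈ π, (m:ℤ) + 2 ≤ AA m a + BB m a :=
      fun a ha => (ZS_iff hm (hvalπ a ha)).mp (hZS a ha)
    have hfind : ∀ p q : SCInt, SVal m p.2 → SVal m q.2 →
        (m:ℤ) ≤ AA m p + BB m p → (m:ℤ) ≤ AA m q + BB m q →
        AA m p ≤ AA m q → BB m q ≤ BB m p → p ≠ q →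
        1 ≤ π.count p + (if p = ω then 1 else 0) →
        1 ≤ π.count q + (if q = ω then 1 else 0) → False := by
      intro p q hp hq hsp hsq hA hB hpq hFp hFq
      obtain ⟨e, hise, hemem, jp, jq, hjp, hjq, hejp, hejq, hne'⟩ :=
        path_exists hm hp hq hsp hsq hA hB hOZ
      have hj := hpath e hise hemem
      have h2 := sum_le_one_two hj (by omega) (by omega) (hne' hpq)
      rw [hejp, hejq] at h2
      omega
    have hnd : π.Nodup := by
      refine nodup_of_count (fun v hv => ?_)
      by_contra hcnt
      push_neg at hcnt
      obtain ⟨e, hise, hemem, jp, jq, hjp, hjq, hejp, hejq, _⟩ :=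
        path_exists hm (hvalπ v hv) (hvalπ v hv) (by linarith [hsums v hv])
          (by linarith [hsums v hv]) le_rfl le_rfl hOZ
      have hj := hpath e hise hemem
      have h1 := sum_le_one_single hj (show jp < m + 1 by omega)
      rw [hejp] at h1
      omega
    have hlex : π.Pairwise (fun a b =>
        AA m b < AA m a ∨ (AA m a = AA m b ∧ BB m a ≤ BB m b)) :=
      chain'_pairwise (fun a b c h1 h2 => by omega)
        (fun a ha b hb hr => sge_lex hm (hvalπ a ha) (hvalπ b hb) hr) hchain
    have hpwD : π.Pairwise (Dom m) := by
      refine pairwise_imp_nodup hnd (fun a ha b hb hne hr => ?_) hlex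
      by_contra hnD
      unfold Dom at hnD
      push_neg at hnD
      have hc1 : AA m b ≤ AA m a := by omega
      have hc2 : BB m a ≤ BB m b := by omega
      refine hfind b a (hvalπ b hb) (hvalπ a ha) (by linarith [hsums b hb])
        (by linarith [hsums a ha]) hc1 hc2 (Ne.symm hne) ?_ ?_
      · have := List.count_pos_iff.mpr hb
        omega
      · have := List.count_pos_iff.mpr ha
        omega
    refine ⟨π ++ [ω], ⟨?_, ?_, ?_⟩, ?_⟩
    · simp
    · intro a ha
      rcases List.mem_append.mp ha with h | h
      · exact hvalπ a h
      · rw [List.mem_singleton.mp h]; exact hωv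
    · unfold List.Chain'
      rw [List.isChain_append]
      refine ⟨?_, List.isChain_singleton _, ?_⟩
      · exact chain'_imp_mem
          (fun a ha b hb hD => (ggrho_iff hm (hvalπ a ha) (hvalπ b hb)).mpr hD)
          hpwD.isChain
      · intro x hx y hy
        have hyω : ω = y := by simpa using hy
        rw [← hyω]
        have hxπ : x ∈ π := List.mem_of_mem_getLast? hx
        refine (ggrho_iff hm (hvalπ x hxπ) hωv).mpr ?_
        by_contra hnD
        unfold Dom at hnD
        push_neg at hnD
        have hsx := hsums x hxπ
        have hxω : x ≠ ω := by
          intro h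
          rw [h] at hsx
          omega
        have hFx : 1 ≤ π.count x + (if x = ω then 1 else 0) := by
          have := List.count_pos_iff.mpr hxπ
          omega
        have hFω : 1 ≤ π.count ω + (if ω = ω then 1 else 0) := by simp
        rcases le_or_gt (AA m x) (AA m ω) with hc | hc
        · have hc2 : BB m ω ≤ BB m x := by omega
          exact hfind x ω (hvalπ x hxπ) hωv (by omega) (by omega) hc hc2 hxω hFx hFω
        · have hc2 : BB m x ≤ BB m ω := by omega
          exact hfind ω x hωv (hvalπ x hxπ) (by omega) (by omega) (by omega) hc2
            (Ne.symm hxω) hFω hFx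
    · simp
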